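/- arXiv:1507.00879 — 9 statements merged into one kernel-verified Lean document; each statement's English description precedes it below -/
import Mathlib

section
/- For every ε ∈ [0,1] and every (u,q) ∈ V × L one has C_ε((u,q),(u,−q)) ≥ (1 − ε/2)‖u‖_V² + (ε/2)‖q‖_L². -/
open scoped RealInnerProductSpace

/-- Uniform coercivity-type lower bound: for every `ε ∈ [0,1]` and `(u,q) ∈ V × L`,
`C_ε((u,q),(u,−q)) ≥ (1 − ε/2)‖u‖² + (ε/2)‖q‖²`. -/
theorem stmt1
    {V L Lt : Type*}
    [NormedAddCommGroup V] [InnerProductSpace ℝ V]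
    [NormedAddCommGroup L] [InnerProductSpace ℝ L]
    [NormedAddCommGroup Lt] [NormedSpace ℝ Lt]
    (j : L →ₗ[ℝ] Lt) (hj : ∀ q : L, ‖j q‖ ≤ ‖q‖)
    (b : Lt →ₗ[ℝ] V →ₗ[ℝ] ℝ)
    (hb : ∀ (q : Lt) (v : V), |b q v| ≤ ‖q‖ * ‖v‖)
    (ε : ℝ) (hε0 : 0 ≤ ε) (hε1 : ε ≤ 1)
    (u : V) (q : L) :
    (1 - ε / 2) * ‖u‖ ^ 2 + (ε / 2) * ‖q‖ ^ 2
      ≤ ⟪u, u⟫ + (1 - ε) * b (j q) u + b (j (-q)) u - ε * ⟪q, -q⟫ := by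
  have h1 : ⟪u, u⟫ = ‖u‖ ^ 2 := real_inner_self_eq_norm_sq u
  have h2 : ⟪q, -q⟫ = -‖q‖ ^ 2 := by
    rw [inner_neg_right, real_inner_self_eq_norm_sq]
  have h3 : b (j (-q)) u = -(b (j q) u) := by
    rw [map_neg, map_neg]; simp
  rw [h1, h2, h3]
  have hbd : |b (j q) u| ≤ ‖q‖ * ‖u‖ :=
    (hb (j q) u).trans (mul_le_mul_of_nonneg_right (hj q) (norm_nonneg u))
  have habs := abs_le.mp hbd
  nlinarith [sq_nonneg (‖u‖ - ‖q‖), norm_nonneg u, norm_nonneg q]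
end

section
/- For every ε ∈ [0,1] and every (u,q) ∈ V × L, one has (1−ε)·α·‖q‖_{L̃} ≤ Z + ‖u‖_V, where Z := sup over nonzero (v,w) ∈ V × L of C_ε((u,q),(v,w)) / ‖(v,w)‖_{X_ε}. -/
open scoped RealInnerProductSpace

/-!
Testing `C_ε((u,q),·)` only against pairs `(v,0)` gives, for every `v ≠ 0`,
`(1-ε) b(q,v)/‖v‖ - ‖u‖ ≤ C_ε((u,q),(v,0))/‖(v,0)‖_{X_ε} ≤ Z`, and the inf-sup condition turns
the supremum over `v` of the left side into `(1-ε)α‖q‖ - ‖u‖`. The supremum `Z` is a genuine one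
because `C_ε` is bounded in the `X_ε` norm, and it is nonnegative because `C_ε((u,q),·)` is odd;
the latter handles the degenerate case `V = 0`.
-/

theorem iSup_ne_zero_nonneg_of_odd {E : Type*} [AddGroup E] (g : E → ℝ)
    (hg : ∀ p, g (-p) = -g p) : 0 ≤ ⨆ p : {p : E // p ≠ 0}, g p := by
  rcases isEmpty_or_nonempty {p : E // p ≠ 0} with _ | ⟨p, hp⟩
  · rw [Real.iSup_of_isEmpty]
  · rcases le_total 0 (g p) with hpos | hneg
    · exact Real.iSup_nonneg' ⟨⟨p, hp⟩, hpos⟩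
    · exact Real.iSup_nonneg' ⟨⟨-p, neg_ne_zero.2 hp⟩, by rw [hg]; linarith⟩

theorem bddAbove_range_div_of_le_mul {ι : Type*} {f N : ι → ℝ} {M : ℝ} (hM : 0 ≤ M)
    (hN : ∀ i, 0 ≤ N i) (hf : ∀ i, f i ≤ M * N i) : BddAbove (Set.range fun i => f i / N i) :=
  ⟨M, Set.forall_mem_range.2 fun i => div_le_of_le_mul₀ (hN i) hM (hf i)⟩

section PerturbedNorm

variable {V L Lt : Type*} [NormedAddCommGroup V] [NormedAddCommGroup L] [NormedSpace ℝ L]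
  [NormedAddCommGroup Lt] [NormedSpace ℝ Lt]

/-- `‖(v,w)‖_{X_ε}`. -/
noncomputable def perturbedNorm (j : L →ₗ[ℝ] Lt) (ε : ℝ) (p : V × L) : ℝ :=
  Real.sqrt (‖p.1‖ ^ 2 + ‖j p.2‖ ^ 2 + ε * ‖p.2‖ ^ 2)

variable {j : L →ₗ[ℝ] Lt} {ε : ℝ}

theorem perturbedNorm_nonneg (p : V × L) : 0 ≤ perturbedNorm j ε p :=
  Real.sqrt_nonneg _

theorem perturbedNorm_neg (p : V × L) : perturbedNorm j ε (-p) = perturbedNorm j ε p := by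
  simp only [perturbedNorm, Prod.fst_neg, Prod.snd_neg, map_neg, norm_neg]

theorem perturbedNorm_inl (v : V) : perturbedNorm j ε ((v, 0) : V × L) = ‖v‖ := by
  simp [perturbedNorm]

theorem le_perturbedNorm {p : V × L} {x : ℝ}
    (hx : x ^ 2 ≤ ‖p.1‖ ^ 2 + ‖j p.2‖ ^ 2 + ε * ‖p.2‖ ^ 2) : x ≤ perturbedNorm j ε p :=
  (le_abs_self x).trans (Real.abs_le_sqrt hx)

variable (hε0 : 0 ≤ ε) (p : V × L)
include hε0

theorem norm_fst_le_perturbedNorm : ‖p.1‖ ≤ perturbedNorm j ε p :=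
  le_perturbedNorm (by nlinarith [sq_nonneg ‖j p.2‖, mul_nonneg hε0 (sq_nonneg ‖p.2‖)])

theorem norm_map_snd_le_perturbedNorm : ‖j p.2‖ ≤ perturbedNorm j ε p :=
  le_perturbedNorm (by nlinarith [sq_nonneg ‖p.1‖, mul_nonneg hε0 (sq_nonneg ‖p.2‖)])

theorem mul_norm_snd_le_perturbedNorm (hε1 : ε ≤ 1) : ε * ‖p.2‖ ≤ perturbedNorm j ε p := by
  have : ε * ε ≤ ε := mul_le_of_le_one_right hε0 hε1
  exact le_perturbedNorm (by nlinarith [sq_nonneg ‖p.1‖, sq_nonneg ‖j p.2‖, sq_nonneg ‖p.2‖])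

end PerturbedNorm

section PerturbedForm

variable {V L Lt : Type*} [NormedAddCommGroup V] [InnerProductSpace ℝ V]
  [NormedAddCommGroup L] [InnerProductSpace ℝ L] [NormedAddCommGroup Lt] [NormedSpace ℝ Lt]

/-- `C_ε((u,q),(v,w))`, with `a` and `c` the inner products of `V` and `L`. -/
def perturbedForm (j : L →ₗ[ℝ] Lt) (b : Lt →ₗ[ℝ] V →ₗ[ℝ] ℝ) (ε : ℝ) (u : V) (q : L)
    (p : V × L) : ℝ :=
  ⟪u, p.1⟫ + (1 - ε) * b (j q) p.1 + b (j p.2) u - ε * ⟪q, p.2⟫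

variable {j : L →ₗ[ℝ] Lt} {b : Lt →ₗ[ℝ] V →ₗ[ℝ] ℝ} {ε : ℝ}

theorem perturbedForm_neg (u : V) (q : L) (p : V × L) :
    perturbedForm j b ε u q (-p) = -perturbedForm j b ε u q p := by
  simp only [perturbedForm, Prod.fst_neg, Prod.snd_neg, inner_neg_right, map_neg,
    LinearMap.neg_apply]
  ring

theorem perturbedForm_inl (u : V) (q : L) (v : V) :
    perturbedForm j b ε u q ((v, 0) : V × L) = ⟪u, v⟫ + (1 - ε) * b (j q) v := by
  simp [perturbedForm]

theorem perturbedForm_le (hj : ∀ q : L, ‖j q‖ ≤ ‖q‖)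
    (hb : ∀ (q : Lt) (v : V), |b q v| ≤ ‖q‖ * ‖v‖) (hε0 : 0 ≤ ε) (hε1 : ε ≤ 1)
    (u : V) (q : L) (p : V × L) :
    perturbedForm j b ε u q p ≤ (2 * ‖u‖ + 2 * ‖q‖) * perturbedNorm j ε p := by
  have hv := norm_fst_le_perturbedNorm (j := j) hε0 p
  have hw := norm_map_snd_le_perturbedNorm (j := j) hε0 p
  have hεw := mul_norm_snd_le_perturbedNorm (j := j) hε0 p hε1
  have h1 : ⟪u, p.1⟫ ≤ ‖u‖ * perturbedNorm j ε p :=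
    (real_inner_le_norm u p.1).trans (by gcongr)
  have h2 : (1 - ε) * b (j q) p.1 ≤ ‖q‖ * perturbedNorm j ε p :=
    calc (1 - ε) * b (j q) p.1 ≤ (1 - ε) * (‖q‖ * perturbedNorm j ε p) := by
          gcongr
          exact (le_abs_self _).trans <| (hb _ _).trans <|
            mul_le_mul (hj q) hv (norm_nonneg _) (norm_nonneg _)
      _ ≤ ‖q‖ * perturbedNorm j ε p :=
          mul_le_of_le_one_left (mul_nonneg (norm_nonneg q) (perturbedNorm_nonneg p))
            (by linarith)
  have h3 : b (j p.2) u ≤ ‖u‖ * perturbedNorm j ε p :=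
    (le_abs_self _).trans <| (hb _ _).trans <| by rw [mul_comm]; gcongr
  have h4 : -(ε * ⟪q, p.2⟫) ≤ ‖q‖ * perturbedNorm j ε p :=
    calc -(ε * ⟪q, p.2⟫) ≤ ε * (‖q‖ * ‖p.2‖) := by
          rw [← mul_neg]
          gcongr
          exact neg_le.1 (neg_le_of_abs_le (abs_real_inner_le_norm q p.2))
      _ = ‖q‖ * (ε * ‖p.2‖) := by ring
      _ ≤ ‖q‖ * perturbedNorm j ε p := by gcongr
  unfold perturbedForm
  linarith

theorem mul_div_norm_sub_norm_le_perturbedForm_inl_div (u : V) (q : L) {v : V} (hv : v ≠ 0) :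
    (1 - ε) * (b (j q) v / ‖v‖) - ‖u‖
      ≤ perturbedForm j b ε u q (v, 0) / perturbedNorm j ε ((v, 0) : V × L) := by
  rw [perturbedForm_inl, perturbedNorm_inl, add_div, mul_div_assoc]
  have : -‖u‖ ≤ ⟪u, v⟫ / ‖v‖ := by
    rw [le_div_iff₀ (norm_pos_iff.2 hv), neg_mul]
    exact neg_le_of_abs_le (abs_real_inner_le_norm u v)
  linarith

end PerturbedForm

theorem stmt2_general
    {V L Lt : Type*}
    [NormedAddCommGroup V] [InnerProductSpace ℝ V]
    [NormedAddCommGroup L] [InnerProductSpace ℝ L]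
    [NormedAddCommGroup Lt] [NormedSpace ℝ Lt]
    (j : L →ₗ[ℝ] Lt) (hj : ∀ q : L, ‖j q‖ ≤ ‖q‖)
    (b : Lt →ₗ[ℝ] V →ₗ[ℝ] ℝ)
    (hb : ∀ (q : Lt) (v : V), |b q v| ≤ ‖q‖ * ‖v‖)
    (α : ℝ)
    (hbinf : ∀ q : Lt, α * ‖q‖ ≤ ⨆ v : {v : V // v ≠ 0}, b q (v : V) / ‖(v : V)‖)
    (ε : ℝ) (hε0 : 0 ≤ ε) (hε1 : ε ≤ 1)
    (u : V) (q : L) :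
    (1 - ε) * α * ‖j q‖
      ≤ (⨆ p : {p : V × L // p ≠ 0},
          (⟪u, (p : V × L).1⟫ + (1 - ε) * b (j q) (p : V × L).1
              + b (j (p : V × L).2) u - ε * ⟪q, (p : V × L).2⟫)
            / Real.sqrt (‖(p : V × L).1‖ ^ 2 + ‖j (p : V × L).2‖ ^ 2
                + ε * ‖(p : V × L).2‖ ^ 2))
        + ‖u‖ := by
  change _ ≤ (⨆ p : {p : V × L // p ≠ 0},
    perturbedForm j b ε u q p / perturbedNorm j ε (p : V × L)) + ‖u‖
  have hZ_nonneg : 0 ≤ ⨆ p : {p : V × L // p ≠ 0},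
      perturbedForm j b ε u q p / perturbedNorm j ε (p : V × L) :=
    iSup_ne_zero_nonneg_of_odd (fun p => perturbedForm j b ε u q p / perturbedNorm j ε p)
      fun p => by rw [perturbedForm_neg, perturbedNorm_neg, neg_div]
  have hZ_bdd := bddAbove_range_div_of_le_mul (by positivity)
    (fun p : {p : V × L // p ≠ 0} => perturbedNorm_nonneg (j := j) (ε := ε) p.1)
    (fun p => perturbedForm_le hj hb hε0 hε1 u q p)
  calc (1 - ε) * α * ‖j q‖ = (1 - ε) * (α * ‖j q‖) := mul_assoc _ _ _
    _ ≤ (1 - ε) * ⨆ v : {v : V // v ≠ 0}, b (j q) (v : V) / ‖(v : V)‖ :=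
      mul_le_mul_of_nonneg_left (hbinf (j q)) (by linarith)
    _ = ⨆ v : {v : V // v ≠ 0}, (1 - ε) * (b (j q) (v : V) / ‖(v : V)‖) :=
      Real.mul_iSup_of_nonneg (by linarith) _
    _ ≤ _ := Real.iSup_le (fun v => sub_le_iff_le_add.1 <|
        (mul_div_norm_sub_norm_le_perturbedForm_inl_div u q v.2).trans <|
          le_ciSup hZ_bdd ⟨((v : V), 0), by simp [v.2]⟩) (by positivity)

/-- For every `ε ∈ [0,1]` and `(u,q) ∈ V × L`, one has
`(1−ε)·α·‖q‖_{L̃} ≤ Z + ‖u‖_V`, where `Z` is the supremum over nonzero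
`(v,w) ∈ V × L` of `C_ε((u,q),(v,w)) / ‖(v,w)‖_{X_ε}`. -/
theorem stmt2
    {V L Lt : Type*}
    [NormedAddCommGroup V] [InnerProductSpace ℝ V]
    [NormedAddCommGroup L] [InnerProductSpace ℝ L]
    [NormedAddCommGroup Lt] [NormedSpace ℝ Lt]
    (j : L →ₗ[ℝ] Lt) (hj : ∀ q : L, ‖j q‖ ≤ ‖q‖)
    (b : Lt →ₗ[ℝ] V →ₗ[ℝ] ℝ)
    (hb : ∀ (q : Lt) (v : V), |b q v| ≤ ‖q‖ * ‖v‖)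
    (α : ℝ) (hα : 0 < α)
    (hbinf : ∀ q : Lt, α * ‖q‖ ≤ ⨆ v : {v : V // v ≠ 0}, b q (v : V) / ‖(v : V)‖)
    (ε : ℝ) (hε0 : 0 ≤ ε) (hε1 : ε ≤ 1)
    (u : V) (q : L) :
    (1 - ε) * α * ‖j q‖
      ≤ (⨆ p : {p : V × L // p ≠ 0},
          (⟪u, (p : V × L).1⟫ + (1 - ε) * b (j q) (p : V × L).1
              + b (j (p : V × L).2) u - ε * ⟪q, (p : V × L).2⟫)
            / Real.sqrt (‖(p : V × L).1‖ ^ 2 + ‖j (p : V × L).2‖ ^ 2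
                + ε * ‖(p : V × L).2‖ ^ 2))
        + ‖u‖ :=
  stmt2_general j hj b hb α hbinf ε hε0 hε1 u q
end

section
/- Let F : V → ℝ be a continuous linear functional. Suppose that for some ε ∈ (0,1] the pair (u^ε, q^ε) ∈ V × L satisfies C_ε((u^ε,q^ε),(v,w)) = F(v) for all (v,w) ∈ V × L, and that (u⁰, q⁰) ∈ V × L satisfies C_0((u⁰,q⁰),(v,w)) = F(v) for all (v,w) ∈ V × L. Then there exists a constant C > 0 depending only on α such that ‖(u^ε − u⁰, q^ε − q⁰)‖_{X_ε} ≤ C √ε · ‖q⁰‖_L; in particular ‖u^ε − u⁰‖_V ≤ C√ε ‖q⁰‖_L and ‖q^ε − q⁰‖_{L̃} ≤ C√ε ‖q⁰‖_L. -/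
open scoped RealInnerProductSpace

theorem aux_energy' (ε E R Q : ℝ) (hε : 0 < ε) (hε1 : ε ≤ 1)
    (hkey : E ^ 2 + ε * R ^ 2 ≤ ε * (R * E) + ε * (Q * E) + ε * (Q * R)) :
    E ^ 2 + ε * R ^ 2 ≤ 8 * ε * Q ^ 2 := by
  nlinarith [mul_nonneg hε.le (sq_nonneg (E - R)), sq_nonneg (E - 2 * ε * Q),
    mul_nonneg hε.le (sq_nonneg (R - 2 * Q)), sq_nonneg E, sq_nonneg Q,
    mul_nonneg hε.le (sq_nonneg Q), mul_nonneg (mul_nonneg hε.le hε.le) (sq_nonneg Q)]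

theorem aux_sqrt' (a b : ℝ) (ha : 0 ≤ a) (hb : 0 ≤ b) (h : a ^ 2 ≤ b ^ 2) : a ≤ b := by
  calc a = Real.sqrt (a ^ 2) := (Real.sqrt_sq ha).symm
    _ ≤ Real.sqrt (b ^ 2) := Real.sqrt_le_sqrt h
    _ = b := Real.sqrt_sq hb

theorem aux_half' (c t m : ℝ) (hc : 1 / 2 ≤ c) (hm : 0 ≤ m) (h : c * t ≤ m) :
    t ≤ 2 * m := by
  rcases le_or_gt t 0 with ht | ht
  · linarith
  · nlinarith

theorem aux_E' (s E R Q : ℝ) (hE0 : 0 ≤ E) (hs0 : 0 ≤ s) (hQ0 : 0 ≤ Q)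
    (hen : E ^ 2 + s ^ 2 * R ^ 2 ≤ 8 * s ^ 2 * Q ^ 2) : E ≤ 3 * s * Q := by
  apply aux_sqrt' _ _ hE0 (by positivity)
  nlinarith [sq_nonneg (s * R), sq_nonneg (s * Q)]

theorem aux_J2' (s E J R Q : ℝ) (hs : 1 ≤ 2 * s ^ 2) (hJ0 : 0 ≤ J) (hQ0 : 0 ≤ Q)
    (hs0 : 0 ≤ s) (hJR : J ≤ R)
    (hen : E ^ 2 + s ^ 2 * R ^ 2 ≤ 8 * s ^ 2 * Q ^ 2) : J ≤ 4 * s * Q := by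
  have hR2 : R ^ 2 ≤ 8 * Q ^ 2 := by nlinarith [sq_nonneg E, sq_nonneg R, sq_nonneg Q]
  apply aux_sqrt' _ _ hJ0 (by positivity)
  nlinarith [sq_nonneg (s * Q), sq_nonneg Q]

theorem aux_final' (A s E J R Q : ℝ) (hA : 0 ≤ A) (hs0 : 0 ≤ s) (hJ0 : 0 ≤ J)
    (hQ0 : 0 ≤ Q) (hen : E ^ 2 + s ^ 2 * R ^ 2 ≤ 8 * s ^ 2 * Q ^ 2)
    (hK : J ≤ (A + 4) * s * Q) :
    Real.sqrt (E ^ 2 + J ^ 2 + s ^ 2 * R ^ 2) ≤ (7 + A) * s * Q := by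
  have h2 : J ^ 2 ≤ ((A + 4) * s * Q) ^ 2 := pow_le_pow_left₀ hJ0 hK 2
  have h3 : E ^ 2 + J ^ 2 + s ^ 2 * R ^ 2 ≤ ((7 + A) * s * Q) ^ 2 := by
    nlinarith [mul_nonneg hA (sq_nonneg (s * Q)), sq_nonneg (s * Q),
      mul_nonneg (mul_nonneg hA hA) (sq_nonneg (s * Q))]
  calc Real.sqrt (E ^ 2 + J ^ 2 + s ^ 2 * R ^ 2)
      ≤ Real.sqrt (((7 + A) * s * Q) ^ 2) := Real.sqrt_le_sqrt h3
    _ = (7 + A) * s * Q := Real.sqrt_sq (by positivity)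

set_option maxHeartbeats 1000000 in
/-- ε-convergence of the solution of the penalized problem `(AP)^ε` to the solution
of the limit saddle-point problem: with a constant `C > 0` depending only on `α`,
`‖(u^ε − u⁰, q^ε − q⁰)‖_{X_ε} ≤ C√ε ‖q⁰‖_L`, and in particular
`‖u^ε − u⁰‖_V ≤ C√ε ‖q⁰‖_L` and `‖q^ε − q⁰‖_{L̃} ≤ C√ε ‖q⁰‖_L`. -/
theorem stmt5 (α : ℝ) (hα : 0 < α) :
    ∃ C : ℝ, 0 < C ∧
      ∀ (V L Lt : Type)
        [NormedAddCommGroup V] [InnerProductSpace ℝ V]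
        [NormedAddCommGroup L] [InnerProductSpace ℝ L]
        [NormedAddCommGroup Lt] [NormedSpace ℝ Lt]
        (j : L →ₗ[ℝ] Lt) (_hj : ∀ q : L, ‖j q‖ ≤ ‖q‖)
        (b : Lt →ₗ[ℝ] V →ₗ[ℝ] ℝ)
        (_hb : ∀ (q : Lt) (v : V), |b q v| ≤ ‖q‖ * ‖v‖)
        (_hbinf : ∀ q : Lt, α * ‖q‖ ≤ ⨆ v : {v : V // v ≠ 0}, b q (v : V) / ‖(v : V)‖)
        (F : V →L[ℝ] ℝ) (ε : ℝ), 0 < ε → ε ≤ 1 →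
        ∀ (uε u0 : V) (qε q0 : L),
          (∀ (v : V) (w : L),
            ⟪uε, v⟫ + (1 - ε) * b (j qε) v + b (j w) uε - ε * ⟪qε, w⟫ = F v) →
          (∀ (v : V) (w : L),
            ⟪u0, v⟫ + (1 - 0 : ℝ) * b (j q0) v + b (j w) u0 - (0 : ℝ) * ⟪q0, w⟫ = F v) →
          Real.sqrt (‖uε - u0‖ ^ 2 + ‖j (qε - q0)‖ ^ 2 + ε * ‖qε - q0‖ ^ 2)
              ≤ C * Real.sqrt ε * ‖q0‖
            ∧ ‖uε - u0‖ ≤ C * Real.sqrt ε * ‖q0‖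
            ∧ ‖j (qε - q0)‖ ≤ C * Real.sqrt ε * ‖q0‖ := by
  have hA : (0:ℝ) < 8 / α := by positivity
  refine ⟨7 + 8 / α, by positivity, ?_⟩
  intro V L Lt _ _ _ _ _ _ j hj b hb hbinf F ε hε hε1 uε u0 qε q0 heq h0eq
  set e : V := uε - u0 with he
  set r : L := qε - q0 with hr
  set s : ℝ := Real.sqrt ε with hs
  have hs2 : s ^ 2 = ε := Real.sq_sqrt hε.le
  have hs0 : 0 < s := Real.sqrt_pos.mpr hε
  have hs1 : s ≤ 1 := by
    rw [show (1:ℝ) = Real.sqrt 1 by simp]; exact Real.sqrt_le_sqrt hε1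
  have hεs : ε ≤ s := by
    calc ε = s * s := (Real.mul_self_sqrt hε.le).symm
      _ ≤ s * 1 := mul_le_mul_of_nonneg_left hs1 hs0.le
      _ = s := mul_one s
  set E : ℝ := ‖e‖ with hE
  set R : ℝ := ‖r‖ with hR
  set J : ℝ := ‖j r‖ with hJ
  set Q : ℝ := ‖q0‖ with hQ
  have hE0 : 0 ≤ E := norm_nonneg _
  have hR0 : 0 ≤ R := norm_nonneg _
  have hJ0 : 0 ≤ J := norm_nonneg _
  have hQ0 : 0 ≤ Q := norm_nonneg _
  have hsQ : 0 ≤ s * Q := mul_nonneg hs0.le hQ0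
  -- equation (B): b (j w) e = ε * ⟪qε, w⟫
  have hB : ∀ w : L, b (j w) e = ε * ⟪qε, w⟫ := by
    intro w
    have h1 := heq 0 w
    have h2 := h0eq 0 w
    simp only [inner_zero_right, map_zero, LinearMap.zero_apply, mul_zero, zero_mul] at h1 h2
    have : b (j w) e = b (j w) uε - b (j w) u0 := by rw [he, map_sub]
    rw [this]; linarith
  -- equation (A): ⟪e, v⟫ + (1-ε) * b (j r) v = ε * b (j q0) v
  have hAv : ∀ v : V, ⟪e, v⟫ + (1 - ε) * b (j r) v = ε * b (j q0) v := by
    intro v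
    have h1 := heq v 0
    have h2 := h0eq v 0
    simp only [inner_zero_right, map_zero, LinearMap.zero_apply, mul_zero, zero_mul] at h1 h2
    have hjr : b (j r) v = b (j qε) v - b (j q0) v := by
      rw [hr, map_sub, map_sub, LinearMap.sub_apply]
    have hin : ⟪e, v⟫ = ⟪uε, v⟫ - ⟪u0, v⟫ := by rw [he, inner_sub_left]
    rw [hin, hjr]; ring_nf; ring_nf at h1 h2; linarith
  -- energy identity
  have hBr := hB r
  have hAe := hAv e
  have hqεr : ⟪qε, r⟫ = R ^ 2 + ⟪q0, r⟫ := by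
    have : qε = r + q0 := by rw [hr]; abel
    rw [this, inner_add_left, real_inner_self_eq_norm_sq]
  have hee : ⟪e, e⟫ = E ^ 2 := real_inner_self_eq_norm_sq e
  have hident : E ^ 2 + ε * R ^ 2
      = ε * b (j r) e + ε * b (j q0) e - ε * ⟪q0, r⟫ := by
    rw [hqεr] at hBr
    rw [hee] at hAe
    linear_combination hAe - hBr
  -- bounds on the three terms
  have hb1 : b (j r) e ≤ R * E := by
    have h1 := (abs_le.mp (hb (j r) e)).2
    have h2 : ‖j r‖ * ‖e‖ ≤ R * E := mul_le_mul_of_nonneg_right (hj r) hE0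
    linarith
  have hb2 : b (j q0) e ≤ Q * E := by
    have h1 := (abs_le.mp (hb (j q0) e)).2
    have h2 : ‖j q0‖ * ‖e‖ ≤ Q * E := mul_le_mul_of_nonneg_right (hj q0) hE0
    linarith
  have hb3 : -⟪q0, r⟫ ≤ Q * R := by
    have h2 := (abs_le.mp (abs_real_inner_le_norm q0 r)).1
    linarith
  have hkey : E ^ 2 + ε * R ^ 2 ≤ ε * (R * E) + ε * (Q * E) + ε * (Q * R) := by
    rw [hident]
    have t1 : ε * b (j r) e ≤ ε * (R * E) := mul_le_mul_of_nonneg_left hb1 hε.le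
    have t2 : ε * b (j q0) e ≤ ε * (Q * E) := mul_le_mul_of_nonneg_left hb2 hε.le
    have t3 : ε * (-⟪q0, r⟫) ≤ ε * (Q * R) := mul_le_mul_of_nonneg_left hb3 hε.le
    linarith
  -- energy estimate
  have henergy : E ^ 2 + ε * R ^ 2 ≤ 8 * ε * Q ^ 2 := aux_energy' ε E R Q hε hε1 hkey
  have henergy' : E ^ 2 + s ^ 2 * R ^ 2 ≤ 8 * s ^ 2 * Q ^ 2 := by rw [hs2]; exact henergy
  have hE3 : E ≤ 3 * s * Q := aux_E' s E R Q hE0 hs0.le hQ0 henergy'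
  -- bound on J
  have hKey : J ≤ (8 / α + 4) * s * Q := by
    by_cases hhalf : ε ≤ 1 / 2
    · -- use the inf-sup condition
      have h1ε : (1:ℝ) / 2 ≤ 1 - ε := by linarith
      have hinf := hbinf (j r)
      by_cases hN : Nonempty {v : V // v ≠ 0}
      · have hsup : (⨆ v : {v : V // v ≠ 0}, b (j r) (v : V) / ‖(v : V)‖)
            ≤ 2 * ((ε * Q + E) * 1) := by
          apply ciSup_le
          rintro ⟨v, hv⟩
          have hv' : 0 < ‖v‖ := norm_pos_iff.mpr hv
          have hnum : (1 - ε) * b (j r) v ≤ (ε * Q + E) * ‖v‖ := by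
            have h := hAv v
            have hin : -⟪e, v⟫ ≤ E * ‖v‖ := by
              have := (abs_le.mp (abs_real_inner_le_norm e v)).1; linarith
            have hb2' : b (j q0) v ≤ Q * ‖v‖ := by
              have h1 := (abs_le.mp (hb (j q0) v)).2
              have h2 : ‖j q0‖ * ‖v‖ ≤ Q * ‖v‖ := mul_le_mul_of_nonneg_right (hj q0) hv'.le
              linarith
            have ht : ε * b (j q0) v ≤ ε * (Q * ‖v‖) := mul_le_mul_of_nonneg_left hb2' hε.le
            linarith only [ht, hin, h]
          rw [div_le_iff₀ hv']
          have hm : 0 ≤ (ε * Q + E) := by positivity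
          have := aux_half' (1 - ε) (b (j r) v) ((ε * Q + E) * ‖v‖) h1ε
            (by positivity) hnum
          calc b (j r) v ≤ 2 * ((ε * Q + E) * ‖v‖) := this
            _ = 2 * ((ε * Q + E) * 1) * ‖v‖ := by ring
        have h2 : α * J ≤ 8 * (s * Q) := by
          have hc : (⨆ v : {v : V // v ≠ 0}, b (j r) (v : V) / ‖(v : V)‖)
              ≤ 2 * (ε * Q + E) := by linarith only [hsup]
          have h1 : α * J ≤ 2 * (ε * Q + E) := le_trans hinf hc
          have hεQ : ε * Q ≤ s * Q := mul_le_mul_of_nonneg_right hεs hQ0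
          linarith only [h1, hεQ, hE3]
        have h4 : J ≤ 8 / α * (s * Q) := by
          rw [div_mul_eq_mul_div, le_div_iff₀ hα]
          calc J * α = α * J := mul_comm J α
            _ ≤ 8 * (s * Q) := h2
        calc J ≤ 8 / α * (s * Q) := h4
          _ ≤ (8 / α + 4) * s * Q := by linarith only [hsQ]
      · haveI := not_nonempty_iff.mp hN
        have hz : (⨆ v : {v : V // v ≠ 0}, b (j r) (v : V) / ‖(v : V)‖) = 0 :=
          Real.iSup_of_isEmpty _
        rw [hz] at hinf
        have hJneg : J ≤ 0 :=
          le_of_not_gt fun hc => absurd hinf (not_le.mpr (mul_pos hα hc))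
        have hnn : (0:ℝ) ≤ (8 / α + 4) * s * Q := by positivity
        linarith only [hJneg, hnn]
    · -- ε ≥ 1/2 : use the energy estimate directly
      push_neg at hhalf
      have hJR : J ≤ R := hj r
      have hs2' : 1 ≤ 2 * s ^ 2 := by rw [hs2]; linarith
      have h4 : J ≤ 4 * s * Q := aux_J2' s E J R Q hs2' hJ0 hQ0 hs0.le hJR henergy'
      have hAsQ : 0 ≤ 8 / α * (s * Q) := mul_nonneg hA.le hsQ
      calc J ≤ 4 * s * Q := h4
        _ ≤ (8 / α + 4) * s * Q := by linarith only [hAsQ]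
  refine ⟨?_, ?_, ?_⟩
  · rw [← hs2]
    exact aux_final' (8 / α) s E J R Q hA.le hs0.le hJ0 hQ0 henergy' hKey
  · have hAsQ : 0 ≤ 8 / α * (s * Q) := mul_nonneg hA.le hsQ
    calc E ≤ 3 * s * Q := hE3
      _ ≤ (7 + 8 / α) * s * Q := by linarith only [hsQ, hAsQ]
  · calc J ≤ (8 / α + 4) * s * Q := hKey
      _ ≤ (7 + 8 / α) * s * Q := by linarith only [hsQ]
end

section
/- Let F : V → ℝ be a continuous linear functional, let ε ∈ [0,1] and σ > 0, and suppose (u^{ε,σ}, ξ^{ε,σ}) ∈ V × L satisfies C_{ε,σ}((u^{ε,σ},ξ^{ε,σ}),(v,w)) = F(v) for all (v,w) ∈ V × L, while (u^ε, ξ^ε) ∈ V × L satisfies C_{ε,0}((u^ε,ξ^ε),(v,w)) = F(v) for all (v,w) ∈ V × L. If there exists κ ≥ 0 with |d(ξ^ε, w)| ≤ κ ‖w‖_{L̃} for all w ∈ L, then there exists a constant C > 0 depending only on α such that ‖(u^{ε,σ} − u^ε, ξ^{ε,σ} − ξ^ε)‖_{X_{ε,σ}} ≤ C σ κ. -/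
open scoped RealInnerProductSpace

set_option maxHeartbeats 1000000

/-- σ-convergence (optimal rate): if `(u^{ε,σ}, ξ^{ε,σ})` solves the stabilized
problem and `(u^ε, ξ^ε)` the unstabilized one, and `|d(ξ^ε, w)| ≤ κ‖w‖_{L̃}` for all
`w ∈ L`, then `‖(u^{ε,σ} − u^ε, ξ^{ε,σ} − ξ^ε)‖_{X_{ε,σ}} ≤ C σ κ` with `C`
depending only on `α`. -/
theorem stmt8 (α : ℝ) (hα : 0 < α) :
    ∃ C : ℝ, 0 < C ∧
      ∀ (V L Lt H : Type)
        [NormedAddCommGroup V] [InnerProductSpace ℝ V]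
        [NormedAddCommGroup L] [InnerProductSpace ℝ L]
        [NormedAddCommGroup Lt] [NormedSpace ℝ Lt]
        [NormedAddCommGroup H] [InnerProductSpace ℝ H]
        (j : L →ₗ[ℝ] Lt) (_hj : ∀ q : L, ‖j q‖ ≤ ‖q‖)
        (i : L →ₗ[ℝ] H)
        (b : Lt →ₗ[ℝ] V →ₗ[ℝ] ℝ)
        (_hb : ∀ (q : Lt) (v : V), |b q v| ≤ ‖q‖ * ‖v‖)
        (_hbinf : ∀ q : Lt, α * ‖q‖ ≤ ⨆ v : {v : V // v ≠ 0}, b q (v : V) / ‖(v : V)‖)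
        (F : V →L[ℝ] ℝ) (ε σ : ℝ), 0 ≤ ε → ε ≤ 1 → 0 < σ →
        ∀ (uεσ uε : V) (ξεσ ξε : L),
          (∀ (v : V) (w : L),
            ⟪uεσ, v⟫ + (1 - ε) * b (j ξεσ) v + b (j w) uεσ - ε * ⟪ξεσ, w⟫
              - σ * ⟪i ξεσ, i w⟫ = F v) →
          (∀ (v : V) (w : L),
            ⟪uε, v⟫ + (1 - ε) * b (j ξε) v + b (j w) uε - ε * ⟪ξε, w⟫
              - (0 : ℝ) * ⟪i ξε, i w⟫ = F v) →
          ∀ κ : ℝ, 0 ≤ κ → (∀ w : L, |⟪i ξε, i w⟫| ≤ κ * ‖j w‖) →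
            Real.sqrt (‖uεσ - uε‖ ^ 2 + ‖j (ξεσ - ξε)‖ ^ 2
                + ε * ‖ξεσ - ξε‖ ^ 2 + σ * ‖i (ξεσ - ξε)‖ ^ 2)
              ≤ C * σ * κ := by
  have hM1 : (1:ℝ) ≤ (1 + α ^ 2) ^ 2 / α ^ 2 := by
    rw [le_div_iff₀ (by positivity)]; nlinarith
  set M : ℝ := (1 + α ^ 2) ^ 2 / α ^ 2 with hMdef
  refine ⟨M + 1, by linarith, ?_⟩
  intro V L Lt H _ _ _ _ _ _ _ _ j hj i b hb hbinf F ε σ hε0 hε1 hσ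
    uεσ uε ξεσ ξε h1 h2 κ hκ hd
  set e := uεσ - uε with he
  set η := ξεσ - ξε with hη
  -- Equation in v (w = 0)
  have eqV : ∀ v : V, ⟪e, v⟫ + (1 - ε) * b (j η) v = 0 := by
    intro v
    have a1 := h1 v 0
    have a2 := h2 v 0
    simp only [map_zero, inner_zero_right, inner_zero_left, LinearMap.zero_apply,
      mul_zero, sub_zero] at a1 a2
    have : ⟪uεσ, v⟫ - ⟪uε, v⟫ + (1 - ε) * (b (j ξεσ) v - b (j ξε) v) = 0 := by
      linarith
    rw [he, hη, inner_sub_left, map_sub, map_sub, LinearMap.sub_apply]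
    linarith [this]
  -- Equation in w (v = 0)
  have eqW : ∀ w : L, b (j w) e - ε * ⟪η, w⟫ - σ * ⟪i η, i w⟫ - σ * ⟪i ξε, i w⟫ = 0 := by
    intro w
    have a1 := h1 0 w
    have a2 := h2 0 w
    simp only [inner_zero_right, inner_zero_left, map_zero, zero_mul, zero_add,
      LinearMap.map_zero] at a1 a2
    have hsplit : ⟪i ξεσ, i w⟫ = ⟪i η, i w⟫ + ⟪i ξε, i w⟫ := by
      rw [hη, map_sub, inner_sub_left]; ring
    have hξ : ⟪ξεσ, w⟫ = ⟪η, w⟫ + ⟪ξε, w⟫ := by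
      rw [hη, inner_sub_left]; ring
    have hbw : b (j w) e = b (j w) uεσ - b (j w) uε := by
      rw [he, map_sub]
    rw [hbw]
    rw [hsplit, hξ] at a1
    linarith
  set A : ℝ := ‖e‖ ^ 2 with hA
  set J : ℝ := ‖j η‖ with hJ
  set B : ℝ := ε * ‖η‖ ^ 2 + σ * ‖i η‖ ^ 2 with hB
  set S : ℝ := ⟪i ξε, i η⟫ with hS
  have hBnn : 0 ≤ B := by positivity
  have hAnn : 0 ≤ A := by positivity
  have hJnn : 0 ≤ J := norm_nonneg _
  have hSb : |S| ≤ κ * J := hd η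
  -- key identities
  have keyA : A = -(1 - ε) * (b (j η) e) := by
    have := eqV e
    rw [real_inner_self_eq_norm_sq] at this
    linarith
  have keyQ : b (j η) e = B + σ * S := by
    have := eqW η
    rw [real_inner_self_eq_norm_sq, real_inner_self_eq_norm_sq] at this
    linarith
  -- Q ≤ 0
  have hQ : b (j η) e ≤ 0 := by
    rcases lt_or_eq_of_le hε1 with hlt | heq
    · nlinarith [keyA, hAnn]
    · have hA0 : A = 0 := by rw [keyA, ← heq]; ring
      have he0 : e = 0 := by
        have := norm_eq_zero.mp (by nlinarith [norm_nonneg e] : ‖e‖ = 0)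
        exact this
      rw [he0, map_zero]
  have hAbd : A ≤ σ * κ * J := by
    have h1e : 0 ≤ 1 - ε := by linarith
    have : A + (1 - ε) * B = -(1 - ε) * (σ * S) := by rw [keyA, keyQ]; ring
    nlinarith [abs_le.mp hSb, mul_nonneg h1e hBnn]
  have hBbd : B ≤ σ * κ * J := by
    have : B = b (j η) e - σ * S := by rw [keyQ]; ring
    nlinarith [abs_le.mp hSb]
  -- bound on J
  have hJbd : J ≤ M * (σ * κ) := by
    rcases le_or_gt (α ^ 2 / (1 + α ^ 2)) ε with hce | hce
    · -- ε not small: use B ≥ ε‖η‖²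
      have hJη : J ≤ ‖η‖ := hj η
      have hεpos : 0 < ε := lt_of_lt_of_le (by positivity) hce
      have hη2 : ε * ‖η‖ ^ 2 ≤ σ * κ * ‖η‖ := by
        have t1 : σ * κ * J ≤ σ * κ * ‖η‖ :=
          mul_le_mul_of_nonneg_left hJη (by positivity)
        have t2 : 0 ≤ σ * ‖i η‖ ^ 2 := by positivity
        linarith [hBbd]
      have hηbd : ε * ‖η‖ ≤ σ * κ := by
        rcases eq_or_lt_of_le (norm_nonneg η) with h0 | h0
        · rw [← h0, mul_zero]; positivity
        · nlinarith
      have hMε : 1 ≤ M * ε := by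
        rw [hMdef, div_mul_eq_mul_div, le_div_iff₀ (by positivity)]
        rw [div_le_iff₀ (by positivity)] at hce
        nlinarith
      have hM0 : 0 < M := by linarith
      calc J ≤ ‖η‖ := hJη
        _ ≤ M * (ε * ‖η‖) := by nlinarith [norm_nonneg η]
        _ ≤ M * (σ * κ) := mul_le_mul_of_nonneg_left hηbd hM0.le
    · -- ε small: use inf-sup
      have h1e : 0 < 1 - ε := by
        have : α ^ 2 / (1 + α ^ 2) < 1 := by
          rw [div_lt_one (by positivity)]; linarith
        linarith
      have hsup : α * J ≤ ‖e‖ / (1 - ε) := by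
        refine le_trans (hbinf (j η)) ?_
        rcases isEmpty_or_nonempty {v : V // v ≠ 0} with hemp | hne
        · rw [Real.iSup_of_isEmpty]; positivity
        · refine ciSup_le ?_
          rintro ⟨v, hv⟩
          have hvn : 0 < ‖v‖ := norm_pos_iff.mpr hv
          rw [div_le_div_iff₀ hvn h1e]
          have := eqV v
          have hin := abs_real_inner_le_norm e v
          rw [abs_le] at hin
          nlinarith
      have hs2 : α * (1 - ε) * J ≤ ‖e‖ := by
        rw [le_div_iff₀ h1e] at hsup
        nlinarith [hsup]
      -- α²(1-ε)² J² ≤ ‖e‖² = A ≤ σκJ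
      have hJ2 : (α * (1 - ε)) ^ 2 * J ^ 2 ≤ σ * κ * J := by
        have hen : 0 ≤ ‖e‖ := norm_nonneg e
        nlinarith [hAbd, hs2, mul_nonneg (mul_nonneg hα.le h1e.le) hJnn]
      have hfrac : 1 / (1 + α ^ 2) < 1 - ε := by
        have hce' : ε * (1 + α ^ 2) < α ^ 2 := (lt_div_iff₀ (by positivity)).mp hce
        rw [div_lt_iff₀ (by positivity)]
        nlinarith
      rcases eq_or_lt_of_le hJnn with h0 | h0
      · rw [← h0]; positivity
      · have : (α * (1 - ε)) ^ 2 * J ≤ σ * κ := by nlinarith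
        have hMineq : 1 ≤ M * (α * (1 - ε)) ^ 2 := by
          have hh : 1 < (1 - ε) * (1 + α ^ 2) := (div_lt_iff₀ (by positivity)).mp hfrac
          have hh2 : 1 < ((1 - ε) * (1 + α ^ 2)) ^ 2 := by nlinarith
          rw [hMdef, div_mul_eq_mul_div, le_div_iff₀ (by positivity)]
          nlinarith [mul_lt_mul_of_pos_left hh2 (show (0:ℝ) < α ^ 2 by positivity)]
        have hM0 : 0 < M := by linarith
        nlinarith [mul_le_mul_of_nonneg_right hMineq hJnn,
          mul_le_mul_of_nonneg_left this hM0.le]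
  -- conclude
  have hσκ : 0 ≤ σ * κ := by positivity
  have hM0 : 0 < M := by linarith
  have t1 : σ * κ * J ≤ σ * κ * (M * (σ * κ)) := mul_le_mul_of_nonneg_left hJbd hσκ
  have tring : σ * κ * (M * (σ * κ)) = M * (σ * κ) ^ 2 := by ring
  have h1 : A ≤ M * (σ * κ) ^ 2 := by linarith [hAbd, t1]
  have h2 : B ≤ M * (σ * κ) ^ 2 := by linarith [hBbd, t1]
  have h3 : J ^ 2 ≤ (M * (σ * κ)) ^ 2 := by
    have := pow_le_pow_left₀ hJnn hJbd 2
    linarith [this]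
  have hsum : A + J ^ 2 + ε * ‖η‖ ^ 2 + σ * ‖i η‖ ^ 2 ≤ ((M + 1) * σ * κ) ^ 2 := by
    have hB' : ε * ‖η‖ ^ 2 + σ * ‖i η‖ ^ 2 = B := hB.symm
    have hre : ((M + 1) * σ * κ) ^ 2
        = (M * (σ * κ)) ^ 2 + 2 * (M * (σ * κ) ^ 2) + (σ * κ) ^ 2 := by ring
    have hsq : 0 ≤ (σ * κ) ^ 2 := sq_nonneg _
    linarith [h1, h2, h3]
  calc Real.sqrt (A + J ^ 2 + ε * ‖η‖ ^ 2 + σ * ‖i η‖ ^ 2)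
      ≤ Real.sqrt (((M + 1) * σ * κ) ^ 2) := Real.sqrt_le_sqrt hsum
    _ = (M + 1) * σ * κ := Real.sqrt_sq (by positivity)
end

section
/- Let F : V → ℝ be a continuous linear functional, let ε ∈ [0,1] and σ > 0, and suppose (u^{ε,σ}, ξ^{ε,σ}) ∈ V × L satisfies C_{ε,σ}((u^{ε,σ},ξ^{ε,σ}),(v,w)) = F(v) for all (v,w) ∈ V × L, while (u^ε, ξ^ε) ∈ V × L satisfies C_{ε,0}((u^ε,ξ^ε),(v,w)) = F(v) for all (v,w) ∈ V × L. Then, without any further hypothesis, there exists a constant C > 0 depending only on α such that ‖(u^{ε,σ} − u^ε, ξ^{ε,σ} − ξ^ε)‖_{X_{ε,σ}} ≤ C √σ · ‖ξ^ε‖_{Ĥ} (the sub-optimal √σ stabilization-error estimate). -/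
open scoped RealInnerProductSpace

set_option maxHeartbeats 1000000 in
/-- σ-convergence (sub-optimal rate, no extra hypothesis): if `(u^{ε,σ}, ξ^{ε,σ})`
solves the stabilized problem and `(u^ε, ξ^ε)` the unstabilized one, then
`‖(u^{ε,σ} − u^ε, ξ^{ε,σ} − ξ^ε)‖_{X_{ε,σ}} ≤ C √σ ‖ξ^ε‖_{Ĥ}` with `C` depending
only on `α`. -/
theorem stmt9 (α : ℝ) (hα : 0 < α) :
    ∃ C : ℝ, 0 < C ∧
      ∀ (V L Lt H : Type)
        [NormedAddCommGroup V] [InnerProductSpace ℝ V]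
        [NormedAddCommGroup L] [InnerProductSpace ℝ L]
        [NormedAddCommGroup Lt] [NormedSpace ℝ Lt]
        [NormedAddCommGroup H] [InnerProductSpace ℝ H]
        (j : L →ₗ[ℝ] Lt) (_hj : ∀ q : L, ‖j q‖ ≤ ‖q‖)
        (i : L →ₗ[ℝ] H)
        (b : Lt →ₗ[ℝ] V →ₗ[ℝ] ℝ)
        (_hb : ∀ (q : Lt) (v : V), |b q v| ≤ ‖q‖ * ‖v‖)
        (_hbinf : ∀ q : Lt, α * ‖q‖ ≤ ⨆ v : {v : V // v ≠ 0}, b q (v : V) / ‖(v : V)‖)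
        (F : V →L[ℝ] ℝ) (ε σ : ℝ), 0 ≤ ε → ε ≤ 1 → 0 < σ →
        ∀ (uεσ uε : V) (ξεσ ξε : L),
          (∀ (v : V) (w : L),
            ⟪uεσ, v⟫ + (1 - ε) * b (j ξεσ) v + b (j w) uεσ - ε * ⟪ξεσ, w⟫
              - σ * ⟪i ξεσ, i w⟫ = F v) →
          (∀ (v : V) (w : L),
            ⟪uε, v⟫ + (1 - ε) * b (j ξε) v + b (j w) uε - ε * ⟪ξε, w⟫
              - (0 : ℝ) * ⟪i ξε, i w⟫ = F v) →
          Real.sqrt (‖uεσ - uε‖ ^ 2 + ‖j (ξεσ - ξε)‖ ^ 2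
              + ε * ‖ξεσ - ξε‖ ^ 2 + σ * ‖i (ξεσ - ξε)‖ ^ 2)
            ≤ C * Real.sqrt σ * ‖i ξε‖ := by
  refine ⟨Real.sqrt (3 + 4 / α ^ 2), Real.sqrt_pos.mpr (by positivity), ?_⟩
  intro V L Lt H _ _ _ _ _ _ _ _ j hj i b hb hbinf F ε σ hε hε1 hσ uεσ uε ξεσ ξε h1 h2
  set eu := uεσ - uε with heu
  set eξ := ξεσ - ξε with heξ
  -- difference equation
  have hd : ∀ (v : V) (w : L),
      ⟪eu, v⟫ + (1 - ε) * b (j eξ) v + b (j w) eu - ε * ⟪eξ, w⟫ - σ * ⟪i eξ, i w⟫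
        = σ * ⟪i ξε, i w⟫ := by
    intro v w
    have e1 := h1 v w
    have e2 := h2 v w
    simp only [heu, heξ, inner_sub_left, map_sub, LinearMap.sub_apply] at *
    ring_nf
    ring_nf at e1 e2
    linarith [e1, e2]
  -- energy estimate
  have key := hd eu (-eξ)
  simp only [map_neg, LinearMap.neg_apply, inner_neg_right, inner_neg_left,
    real_inner_self_eq_norm_sq] at key
  have hcs : |⟪i ξε, i eξ⟫| ≤ ‖i ξε‖ * ‖i eξ‖ := abs_real_inner_le_norm _ _
  have hbb : |b (j eξ) eu| ≤ ‖j eξ‖ * ‖eu‖ := hb _ _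
  have hjj : ‖j eξ‖ ≤ ‖eξ‖ := hj eξ
  have hA : ‖eu‖ ^ 2 + ε * ‖eξ‖ ^ 2 + σ * ‖i eξ‖ ^ 2 ≤ σ * ‖i ξε‖ ^ 2 := by
    rcases abs_le.mp hcs with ⟨hcs1, _⟩
    rcases abs_le.mp hbb with ⟨_, hbb2⟩
    have hbε : ε * b (j eξ) eu ≤ ε * (‖eξ‖ * ‖eu‖) := by
      have : b (j eξ) eu ≤ ‖eξ‖ * ‖eu‖ :=
        hbb2.trans (mul_le_mul_of_nonneg_right hjj (norm_nonneg _))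
      exact mul_le_mul_of_nonneg_left this hε
    nlinarith [sq_nonneg (‖eu‖ - ε * ‖eξ‖),
      mul_nonneg (mul_nonneg hε (sub_nonneg.mpr hε1)) (sq_nonneg ‖eξ‖),
      mul_nonneg hσ.le (sq_nonneg (‖i ξε‖ - ‖i eξ‖)), hσ.le]
  -- inf-sup estimate
  have h0 : ∀ v : V, (1 - ε) * b (j eξ) v = -⟪eu, v⟫ := by
    intro v
    have := hd v 0
    simp only [map_zero, inner_zero_right, mul_zero, LinearMap.map_zero,
      LinearMap.zero_apply] at this
    linarith
  have hB : α * ((1 - ε) * ‖j eξ‖) ≤ ‖eu‖ := by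
    have hs := hbinf ((1 - ε) • j eξ)
    rw [norm_smul, Real.norm_eq_abs, abs_of_nonneg (by linarith : (0:ℝ) ≤ 1 - ε)] at hs
    refine hs.trans (Real.iSup_le (fun v => ?_) (norm_nonneg _))
    have hv : (0:ℝ) < ‖(v : V)‖ := norm_pos_iff.mpr v.2
    rw [div_le_iff₀ hv]
    have : b ((1 - ε) • j eξ) (v : V) = (1 - ε) * b (j eξ) (v : V) := by
      simp [map_smul]
    rw [this, h0 (v : V)]
    have hna : -⟪eu, (v : V)⟫ ≤ |⟪eu, (v : V)⟫| := neg_le_abs _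
    linarith [abs_real_inner_le_norm eu (v : V)]
  -- combine
  have hK : (0:ℝ) ≤ 4 / α ^ 2 := by positivity
  have hS : ‖eu‖ ^ 2 + ‖j eξ‖ ^ 2 + ε * ‖eξ‖ ^ 2 + σ * ‖i eξ‖ ^ 2
      ≤ (3 + 4 / α ^ 2) * (σ * ‖i ξε‖ ^ 2) := by
    by_cases hc : (1:ℝ)/2 ≤ ε
    · have h1' : ‖j eξ‖ ^ 2 ≤ ‖eξ‖ ^ 2 := by
        nlinarith [norm_nonneg (j eξ), norm_nonneg eξ]
      have h2' : ‖eξ‖ ^ 2 ≤ 2 * (ε * ‖eξ‖ ^ 2) := by nlinarith [sq_nonneg ‖eξ‖]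
      linarith [hA, h1', h2', sq_nonneg ‖eu‖,
        mul_nonneg hσ.le (sq_nonneg ‖i eξ‖),
        mul_nonneg hK (mul_nonneg hσ.le (sq_nonneg ‖i ξε‖))]
    · push_neg at hc
      have hq : α ^ 2 * ‖j eξ‖ ^ 2 ≤ 4 * ‖eu‖ ^ 2 := by
        have h2x : α * ‖j eξ‖ ≤ 2 * ‖eu‖ := by
          have hp : 0 ≤ α * ‖j eξ‖ * (1/2 - ε) :=
            mul_nonneg (mul_nonneg hα.le (norm_nonneg (j eξ))) (by linarith)
          nlinarith [hB, hp]
        have hsq := mul_self_le_mul_self (mul_nonneg hα.le (norm_nonneg (j eξ))) h2x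
        nlinarith [hsq]
      have hy : ‖j eξ‖ ^ 2 ≤ 4 / α ^ 2 * ‖eu‖ ^ 2 := by
        rw [div_mul_eq_mul_div, le_div_iff₀ (by positivity : (0:ℝ) < α ^ 2)]
        linarith [hq]
      have hx : ‖eu‖ ^ 2 ≤ σ * ‖i ξε‖ ^ 2 := by
        linarith [hA, mul_nonneg hε (sq_nonneg ‖eξ‖), mul_nonneg hσ.le (sq_nonneg ‖i eξ‖)]
      have hy2 : ‖j eξ‖ ^ 2 ≤ 4 / α ^ 2 * (σ * ‖i ξε‖ ^ 2) :=
        hy.trans (mul_le_mul_of_nonneg_left hx hK)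
      linarith [hA, hy2, mul_nonneg hσ.le (sq_nonneg ‖i ξε‖)]
  have hrw : Real.sqrt (3 + 4 / α ^ 2) * Real.sqrt σ * ‖i ξε‖
      = Real.sqrt ((3 + 4 / α ^ 2) * (σ * ‖i ξε‖ ^ 2)) := by
    rw [Real.sqrt_mul (by positivity), Real.sqrt_mul hσ.le, Real.sqrt_sq (norm_nonneg _)]
    ring
  rw [hrw]
  exact Real.sqrt_le_sqrt (by linarith [hS])
end

section
/- Let N ≥ 1, let 𝔸 be a real N×N matrix, let ‖·‖_X be a norm on ℝ^N, and let m, M′, M, β be positive constants such that: (i) m‖Φ‖₂ ≤ ‖Φ‖_X ≤ M′‖Φ‖₂ for all Φ ∈ ℝ^N; (ii) |Ψᵀ𝔸Φ| ≤ M ‖Φ‖_X ‖Ψ‖_X for all Φ, Ψ ∈ ℝ^N; (iii) for every nonzero Φ ∈ ℝ^N there exists a nonzero Ψ ∈ ℝ^N with Ψᵀ𝔸Φ ≥ β ‖Φ‖_X ‖Ψ‖_X. Then 𝔸 is invertible and its spectral condition number satisfies cond₂(𝔸) = ‖𝔸‖₂ ‖𝔸⁻¹‖₂ ≤ M·M′²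 / (β·m²), where ‖·‖₂ denotes the operator norm induced by the Euclidean norm. -/
/-!
The inf-sup condition, read through the norm equivalence, gives `⟪Ψ, 𝔸Φ⟫ ≥ β m² ‖Φ‖₂ ‖Ψ‖₂`
for some `Ψ ≠ 0`, hence `‖𝔸Φ‖₂ ≥ β m² ‖Φ‖₂`: `𝔸` is injective, so invertible, and
`‖𝔸⁻¹‖₂ ≤ (β m²)⁻¹`. Testing the continuity bound with `Ψ = 𝔸Φ` gives
`‖𝔸Φ‖₂² ≤ M M′² ‖Φ‖₂ ‖𝔸Φ‖₂`, i.e. `‖𝔸‖₂ ≤ M M′²`.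
-/

open scoped RealInnerProductSpace

section InnerProductSpace

variable {E : Type*} [NormedAddCommGroup E] [InnerProductSpace ℝ E]

theorem le_norm_of_mul_norm_le_inner {v y : E} {c : ℝ} (hy : y ≠ 0) (h : c * ‖y‖ ≤ ⟪y, v⟫) :
    c ≤ ‖v‖ :=
  le_of_mul_le_mul_right ((h.trans (real_inner_le_norm y v)).trans_eq (mul_comm _ _))
    (norm_pos_iff.2 hy)

variable (Xn : E → ℝ) {m M' M β : ℝ} (T : E → E)

theorem mul_sq_mul_norm_le_norm_of_infSup (hm : 0 ≤ m) (hβ : 0 ≤ β)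
    (hXn : ∀ x, m * ‖x‖ ≤ Xn x)
    (hinfsup : ∀ x, x ≠ 0 → ∃ y, y ≠ 0 ∧ β * (Xn x * Xn y) ≤ ⟪y, T x⟫) (x : E) :
    β * m ^ 2 * ‖x‖ ≤ ‖T x‖ := by
  rcases eq_or_ne x 0 with rfl | hx
  · simp
  obtain ⟨y, hy, hxy⟩ := hinfsup x hx
  refine le_norm_of_mul_norm_le_inner hy (le_trans ?_ hxy)
  calc β * m ^ 2 * ‖x‖ * ‖y‖ = β * ((m * ‖x‖) * (m * ‖y‖)) := by ring
    _ ≤ β * (Xn x * Xn y) := by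
      gcongr
      · exact (mul_nonneg hm (norm_nonneg x)).trans (hXn x)
      · exact hXn x
      · exact hXn y

theorem norm_apply_le_of_abs_inner_le (hM : 0 ≤ M) (hXn_nonneg : ∀ x, 0 ≤ Xn x)
    (hXn : ∀ x, Xn x ≤ M' * ‖x‖)
    (hcont : ∀ x y, |⟪y, T x⟫| ≤ M * (Xn x * Xn y)) (x : E) :
    ‖T x‖ ≤ M * M' ^ 2 * ‖x‖ := by
  rcases (norm_nonneg (T x)).eq_or_lt with h0 | hpos
  · rw [← h0]
    positivity
  refine le_of_mul_le_mul_right ?_ hpos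
  calc ‖T x‖ * ‖T x‖ = ⟪T x, T x⟫ := (real_inner_self_eq_norm_mul_norm _).symm
    _ ≤ M * (Xn x * Xn (T x)) := (le_abs_self _).trans (hcont x (T x))
    _ ≤ M * ((M' * ‖x‖) * (M' * ‖T x‖)) := by
      gcongr
      · exact hXn_nonneg _
      · exact (hXn_nonneg x).trans (hXn x)
      · exact hXn x
      · exact hXn _
    _ = M * M' ^ 2 * ‖x‖ * ‖T x‖ := by ring

end InnerProductSpace

theorem ContinuousLinearMap.opNorm_le_inv_of_rightInverse {E F : Type*}
    [SeminormedAddCommGroup E] [NormedSpace ℝ E] [SeminormedAddCommGroup F] [NormedSpace ℝ F]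
    {T : E → F} {S : F →L[ℝ] E} (hST : Function.RightInverse S T) {c : ℝ} (hc : 0 < c)
    (hT : ∀ x, c * ‖x‖ ≤ ‖T x‖) : ‖S‖ ≤ c⁻¹ :=
  S.opNorm_le_bound (inv_nonneg.2 hc.le) fun y => by
    rw [inv_mul_eq_div, le_div_iff₀ hc, mul_comm]
    simpa only [hST y] using hT (S y)

theorem injective_of_mul_norm_le_norm {E F : Type*} [NormedAddCommGroup E]
    [SeminormedAddCommGroup F] {c : ℝ} (hc : 0 < c) (f : E →+ F) (hf : ∀ x, c * ‖x‖ ≤ ‖f x‖) :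
    Function.Injective f :=
  (injective_iff_map_eq_zero f).2 fun x hx =>
    norm_eq_zero.1 <| le_antisymm
      (nonpos_of_mul_nonpos_right (by simpa [hx] using hf x) hc) (norm_nonneg x)

namespace Matrix

variable {n 𝕜 : Type*} [Fintype n] [DecidableEq n] [RCLike 𝕜]

theorem isUnit_of_injective_toEuclideanLin {A : Matrix n n 𝕜}
    (h : Function.Injective (toEuclideanLin A)) : IsUnit A :=
  mulVec_injective_iff_isUnit.1 fun x y hxy =>
    WithLp.toLp_injective 2 (h (by simp only [toLpLin_toLp, toLin'_apply, hxy]))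

theorem toEuclideanLin_mul_inv_apply {A : Matrix n n 𝕜} (hA : IsUnit A) (y : EuclideanSpace 𝕜 n) :
    toEuclideanLin A (toEuclideanLin A⁻¹ y) = y := by
  rw [← LinearMap.comp_apply, ← toLpLin_mul, mul_nonsing_inv A ((isUnit_iff_isUnit_det A).1 hA),
    toLpLin_one, LinearMap.id_apply]

end Matrix

theorem stmt12_general (N : ℕ) (A : Matrix (Fin N) (Fin N) ℝ)
    (Xn : EuclideanSpace ℝ (Fin N) → ℝ)
    (m M' M β : ℝ) (hm : 0 < m) (hM : 0 < M) (hβ : 0 < β)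
    (hequiv : ∀ Φ : EuclideanSpace ℝ (Fin N), m * ‖Φ‖ ≤ Xn Φ ∧ Xn Φ ≤ M' * ‖Φ‖)
    (hcont : ∀ Φ Ψ : EuclideanSpace ℝ (Fin N),
      |⟪Ψ, Matrix.toEuclideanLin A Φ⟫| ≤ M * (Xn Φ * Xn Ψ))
    (hinfsup : ∀ Φ : EuclideanSpace ℝ (Fin N), Φ ≠ 0 →
      ∃ Ψ : EuclideanSpace ℝ (Fin N), Ψ ≠ 0 ∧
        β * (Xn Φ * Xn Ψ) ≤ ⟪Ψ, Matrix.toEuclideanLin A Φ⟫) :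
    IsUnit A ∧
      ‖LinearMap.toContinuousLinearMap (Matrix.toEuclideanLin A)‖ *
        ‖LinearMap.toContinuousLinearMap (Matrix.toEuclideanLin A⁻¹)‖
        ≤ M * M' ^ 2 / (β * m ^ 2) := by
  have hc : 0 < β * m ^ 2 := by positivity
  have hlower := mul_sq_mul_norm_le_norm_of_infSup Xn _ hm.le hβ.le (fun Φ => (hequiv Φ).1) hinfsup
  have hupper := norm_apply_le_of_abs_inner_le Xn _ hM.le
    (fun Φ => (mul_nonneg hm.le (norm_nonneg Φ)).trans (hequiv Φ).1) (fun Φ => (hequiv Φ).2) hcont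
  have hA : IsUnit A := Matrix.isUnit_of_injective_toEuclideanLin
    (injective_of_mul_norm_le_norm hc (Matrix.toEuclideanLin A).toAddMonoidHom hlower)
  refine ⟨hA, ?_⟩
  rw [div_eq_mul_inv]
  gcongr
  · exact ContinuousLinearMap.opNorm_le_bound _ (by positivity) hupper
  · exact ContinuousLinearMap.opNorm_le_inv_of_rightInverse
      (S := LinearMap.toContinuousLinearMap (Matrix.toEuclideanLin A⁻¹))
      (Matrix.toEuclideanLin_mul_inv_apply hA) hc hlower

/-- Abstract condition-number bound: if the matrix `𝔸` is continuous and satisfies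
an inf-sup condition with respect to a norm `‖·‖_X` on `ℝ^N` which is equivalent to
the Euclidean norm (`m‖Φ‖₂ ≤ ‖Φ‖_X ≤ M′‖Φ‖₂`), then `𝔸` is invertible and
`cond₂(𝔸) = ‖𝔸‖₂‖𝔸⁻¹‖₂ ≤ M M′²/(β m²)`. -/
theorem stmt12 (N : ℕ) (hN : 1 ≤ N) (A : Matrix (Fin N) (Fin N) ℝ)
    (Xn : EuclideanSpace ℝ (Fin N) → ℝ)
    (m M' M β : ℝ) (hm : 0 < m) (hM' : 0 < M') (hM : 0 < M) (hβ : 0 < β)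
    (hXn_add : ∀ Φ Ψ : EuclideanSpace ℝ (Fin N), Xn (Φ + Ψ) ≤ Xn Φ + Xn Ψ)
    (hXn_smul : ∀ (c : ℝ) (Φ : EuclideanSpace ℝ (Fin N)), Xn (c • Φ) = |c| * Xn Φ)
    (hXn_pos : ∀ Φ : EuclideanSpace ℝ (Fin N), Φ ≠ 0 → 0 < Xn Φ)
    (hequiv : ∀ Φ : EuclideanSpace ℝ (Fin N), m * ‖Φ‖ ≤ Xn Φ ∧ Xn Φ ≤ M' * ‖Φ‖)
    (hcont : ∀ Φ Ψ : EuclideanSpace ℝ (Fin N),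
      |⟪Ψ, Matrix.toEuclideanLin A Φ⟫| ≤ M * (Xn Φ * Xn Ψ))
    (hinfsup : ∀ Φ : EuclideanSpace ℝ (Fin N), Φ ≠ 0 →
      ∃ Ψ : EuclideanSpace ℝ (Fin N), Ψ ≠ 0 ∧
        β * (Xn Φ * Xn Ψ) ≤ ⟪Ψ, Matrix.toEuclideanLin A Φ⟫) :
    IsUnit A ∧
      ‖LinearMap.toContinuousLinearMap (Matrix.toEuclideanLin A)‖ *
        ‖LinearMap.toContinuousLinearMap (Matrix.toEuclideanLin A⁻¹)‖
        ≤ M * M' ^ 2 / (β * m ^ 2) :=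
  stmt12_general N A Xn m M' M β hm hM hβ hequiv hcont hinfsup
end

section
/- Let ε ∈ [0,1], σ ≥ 0, s ∈ ℝ, and let (f_{k,l})_{k≥1, l≥1} be a family of real numbers with Σ_{k≥1, l≥1} (k²+l²)^s f_{k,l}² < ∞. Then Σ_{k≥1, l≥1} [(k²+l²)^s l⁴ / ((εl²+σ)(k²+l²) + (1−ε)l⁴)²] · f_{k,l}² ≤ Σ_{k≥1, l≥1} (k²+l²)^s f_{k,l}². -/
/-- Fourier-coefficient form of the ε- and σ-uniform regularity estimate
`|ξ^{ε,σ}|_{H^s} ≤ |f|_{H^s}` for the auxiliary variable: for `ε ∈ [0,1]`,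
`σ ≥ 0`, indices `k ≥ 1`, `l ≥ 1` (encoded via `k = p.1 + 1`, `l = p.2 + 1`). -/
theorem stmt14 (ε σ s : ℝ) (hε0 : 0 ≤ ε) (hε1 : ε ≤ 1) (hσ : 0 ≤ σ)
    (f : ℕ → ℕ → ℝ)
    (hf : Summable (fun p : ℕ × ℕ =>
      (((p.1 : ℝ) + 1) ^ 2 + ((p.2 : ℝ) + 1) ^ 2) ^ s * f (p.1 + 1) (p.2 + 1) ^ 2)) :
    (∑' p : ℕ × ℕ,
        (((p.1 : ℝ) + 1) ^ 2 + ((p.2 : ℝ) + 1) ^ 2) ^ s * ((p.2 : ℝ) + 1) ^ 4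
          / ((ε * ((p.2 : ℝ) + 1) ^ 2 + σ) * (((p.1 : ℝ) + 1) ^ 2 + ((p.2 : ℝ) + 1) ^ 2)
              + (1 - ε) * ((p.2 : ℝ) + 1) ^ 4) ^ 2
          * f (p.1 + 1) (p.2 + 1) ^ 2)
      ≤ ∑' p : ℕ × ℕ,
          (((p.1 : ℝ) + 1) ^ 2 + ((p.2 : ℝ) + 1) ^ 2) ^ s * f (p.1 + 1) (p.2 + 1) ^ 2 := by
  have key : ∀ p : ℕ × ℕ,
      (((p.1 : ℝ) + 1) ^ 2 + ((p.2 : ℝ) + 1) ^ 2) ^ s * ((p.2 : ℝ) + 1) ^ 4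
          / ((ε * ((p.2 : ℝ) + 1) ^ 2 + σ) * (((p.1 : ℝ) + 1) ^ 2 + ((p.2 : ℝ) + 1) ^ 2)
              + (1 - ε) * ((p.2 : ℝ) + 1) ^ 4) ^ 2
          * f (p.1 + 1) (p.2 + 1) ^ 2
      ≤ (((p.1 : ℝ) + 1) ^ 2 + ((p.2 : ℝ) + 1) ^ 2) ^ s * f (p.1 + 1) (p.2 + 1) ^ 2 := by
    intro p
    set k : ℝ := (p.1 : ℝ) + 1 with hk
    set l : ℝ := (p.2 : ℝ) + 1 with hl
    have hk1 : 1 ≤ k := by simp [hk]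
    have hl1 : 1 ≤ l := by simp [hl]
    set D : ℝ := (ε * l ^ 2 + σ) * (k ^ 2 + l ^ 2) + (1 - ε) * l ^ 4 with hD
    have hDl : l ^ 4 ≤ D := by
      have h1 : ε * l ^ 2 * (l ^ 2) ≤ (ε * l ^ 2 + σ) * (k ^ 2 + l ^ 2) := by
        nlinarith [sq_nonneg k, sq_nonneg l, mul_nonneg hε0 (sq_nonneg l)]
      nlinarith
    have hl2 : (1:ℝ) ≤ l ^ 2 := by nlinarith
    have hl4 : (1:ℝ) ≤ l ^ 4 := by nlinarith
    have hDpos : 0 < D := by nlinarith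
    have hAs : 0 ≤ (k ^ 2 + l ^ 2) ^ s := Real.rpow_nonneg (by positivity) s
    have hfrac : (k ^ 2 + l ^ 2) ^ s * l ^ 4 / D ^ 2 ≤ (k ^ 2 + l ^ 2) ^ s := by
      rw [div_le_iff₀ (by positivity)]
      nlinarith [mul_le_mul_of_nonneg_left (by nlinarith : l ^ 4 ≤ D ^ 2) hAs]
    have hf2 : 0 ≤ f (p.1 + 1) (p.2 + 1) ^ 2 := sq_nonneg _
    exact mul_le_mul_of_nonneg_right hfrac hf2
  have hnn : ∀ p : ℕ × ℕ,
      0 ≤ (((p.1 : ℝ) + 1) ^ 2 + ((p.2 : ℝ) + 1) ^ 2) ^ s * ((p.2 : ℝ) + 1) ^ 4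
          / ((ε * ((p.2 : ℝ) + 1) ^ 2 + σ) * (((p.1 : ℝ) + 1) ^ 2 + ((p.2 : ℝ) + 1) ^ 2)
              + (1 - ε) * ((p.2 : ℝ) + 1) ^ 4) ^ 2
          * f (p.1 + 1) (p.2 + 1) ^ 2 := by
    intro p
    have : 0 ≤ (((p.1 : ℝ) + 1) ^ 2 + ((p.2 : ℝ) + 1) ^ 2) ^ s :=
      Real.rpow_nonneg (by positivity) s
    positivity
  exact Summable.tsum_le_tsum key (Summable.of_nonneg_of_le hnn key hf) hf
end

section
/- Let ε ∈ (0,1], s ∈ ℝ, and let (f_{k,l})_{k≥1, l≥1} be a family of real numbers with Σ_{k≥1, l≥1} (k²+l²)^s f_{k,l}² < ∞. Then Σ_{k≥1, l≥1} [(k²+l²)^s l⁴ / (k² + l²/ε)²] · f_{k,l}² ≤ ε² · Σ_{k≥1, l≥1} (k²+l²)^s f_{k,l}². -/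
/-!
The Fourier multiplier `l⁴ / (k² + l²/ε)²` of `∂_yy u^ε` is at most `ε²`, because its denominator
dominates `(l²/ε)²`. A nonnegative multiplier bounded by `ε²` acting on the nonnegative summable
weights `(k² + l²)^s f_{k,l}²` scales their sum by at most `ε²`.
-/

lemma pow_four_div_sq_add_sq_div_le {ε : ℝ} (hε : 0 < ε) (a b : ℝ) :
    b ^ 4 / (a ^ 2 + b ^ 2 / ε) ^ 2 ≤ ε ^ 2 := by
  have hbε : b ^ 2 / ε ≤ a ^ 2 + b ^ 2 / ε := le_add_of_nonneg_left (sq_nonneg a)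
  refine div_le_of_le_mul₀ (sq_nonneg _) (sq_nonneg ε) ?_
  calc b ^ 4 = ε ^ 2 * (b ^ 2 / ε) ^ 2 := by field_simp
    _ ≤ ε ^ 2 * (a ^ 2 + b ^ 2 / ε) ^ 2 := by gcongr

lemma tsum_mul_le_mul_tsum {ι : Type*} {m w : ι → ℝ} {c : ℝ} (hm0 : ∀ i, 0 ≤ m i)
    (hm : ∀ i, m i ≤ c) (hw0 : ∀ i, 0 ≤ w i) (hw : Summable w) :
    ∑' i, m i * w i ≤ c * ∑' i, w i := by
  have hle : ∀ i, m i * w i ≤ c * w i := fun i => mul_le_mul_of_nonneg_right (hm i) (hw0 i)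
  have hmw : Summable fun i => m i * w i :=
    (hw.mul_left c).of_nonneg_of_le (fun i => mul_nonneg (hm0 i) (hw0 i)) hle
  rw [← tsum_mul_left]
  exact hmw.tsum_le_tsum hle (hw.mul_left c)

theorem stmt15_general (ε s : ℝ) (hε0 : 0 < ε)
    (f : ℕ → ℕ → ℝ)
    (hf : Summable (fun p : ℕ × ℕ =>
      (((p.1 : ℝ) + 1) ^ 2 + ((p.2 : ℝ) + 1) ^ 2) ^ s * f (p.1 + 1) (p.2 + 1) ^ 2)) :
    (∑' p : ℕ × ℕ,
        (((p.1 : ℝ) + 1) ^ 2 + ((p.2 : ℝ) + 1) ^ 2) ^ s * ((p.2 : ℝ) + 1) ^ 4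
          / (((p.1 : ℝ) + 1) ^ 2 + ((p.2 : ℝ) + 1) ^ 2 / ε) ^ 2
          * f (p.1 + 1) (p.2 + 1) ^ 2)
      ≤ ε ^ 2 *
          ∑' p : ℕ × ℕ,
            (((p.1 : ℝ) + 1) ^ 2 + ((p.2 : ℝ) + 1) ^ 2) ^ s
              * f (p.1 + 1) (p.2 + 1) ^ 2 := by
  have hweight : ∀ p : ℕ × ℕ,
      0 ≤ (((p.1 : ℝ) + 1) ^ 2 + ((p.2 : ℝ) + 1) ^ 2) ^ s * f (p.1 + 1) (p.2 + 1) ^ 2 :=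
    fun p => mul_nonneg (Real.rpow_nonneg (by positivity) s) (sq_nonneg _)
  calc _ = ∑' p : ℕ × ℕ,
        ((p.2 : ℝ) + 1) ^ 4 / (((p.1 : ℝ) + 1) ^ 2 + ((p.2 : ℝ) + 1) ^ 2 / ε) ^ 2
          * ((((p.1 : ℝ) + 1) ^ 2 + ((p.2 : ℝ) + 1) ^ 2) ^ s * f (p.1 + 1) (p.2 + 1) ^ 2) :=
        tsum_congr fun p => by ring
    _ ≤ _ := tsum_mul_le_mul_tsum (fun p => by positivity)
        (fun p => pow_four_div_sq_add_sq_div_le hε0 _ _) hweight hf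

/-- Fourier-coefficient form of the estimate `|∂_yy u^ε|_{H^s} ≤ ε |f|_{H^s}`
(case `σ = 0`): for `ε ∈ (0,1]`, indices `k ≥ 1`, `l ≥ 1`
(encoded via `k = p.1 + 1`, `l = p.2 + 1`). -/
theorem stmt15 (ε s : ℝ) (hε0 : 0 < ε) (hε1 : ε ≤ 1)
    (f : ℕ → ℕ → ℝ)
    (hf : Summable (fun p : ℕ × ℕ =>
      (((p.1 : ℝ) + 1) ^ 2 + ((p.2 : ℝ) + 1) ^ 2) ^ s * f (p.1 + 1) (p.2 + 1) ^ 2)) :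
    (∑' p : ℕ × ℕ,
        (((p.1 : ℝ) + 1) ^ 2 + ((p.2 : ℝ) + 1) ^ 2) ^ s * ((p.2 : ℝ) + 1) ^ 4
          / (((p.1 : ℝ) + 1) ^ 2 + ((p.2 : ℝ) + 1) ^ 2 / ε) ^ 2
          * f (p.1 + 1) (p.2 + 1) ^ 2)
      ≤ ε ^ 2 *
          ∑' p : ℕ × ℕ,
            (((p.1 : ℝ) + 1) ^ 2 + ((p.2 : ℝ) + 1) ^ 2) ^ s
              * f (p.1 + 1) (p.2 + 1) ^ 2 :=
  stmt15_general ε s hε0 f hf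
end

section
/- For every positive integer k, with q_k(x,y) := sin(kx)(cos y − cos 2y) and v_k(x,y) := sin(kx)( (k²+1)⁻¹ cos y − 4(k²+4)⁻¹ cos 2y ), one has ∫_{(0,π)×(0,π)} |∇v_k(x,y)|² dx dy = (π²/4)·(1/(k²+1) + 16/(k²+4)) and ∫_{(0,π)×(0,π)} (∂q_k/∂y (x,y))² dx dy = 5π²/4; consequently the ratio ( ∫ |∇v_k|² )^{1/2} / ( ∫ (∂_y q_k)² )^{1/2} equals (1/√5)·(1/(k²+1) + 16/(k²+4))^{1/2}, which tends to 0 as k → ∞. -/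
open scoped Real

/-- `q_k(x,y) = sin(kx)(cos y − cos 2y)`. -/
noncomputable def qfun (k : ℕ) (x y : ℝ) : ℝ :=
  Real.sin ((k : ℝ) * x) * (Real.cos y - Real.cos (2 * y))

/-- `v_k(x,y) = sin(kx)((k²+1)⁻¹ cos y − 4(k²+4)⁻¹ cos 2y)`. -/
noncomputable def vfun (k : ℕ) (x y : ℝ) : ℝ :=
  Real.sin ((k : ℝ) * x) *
    (((k : ℝ) ^ 2 + 1)⁻¹ * Real.cos y - 4 * ((k : ℝ) ^ 2 + 4)⁻¹ * Real.cos (2 * y))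

/-!
The partial derivatives of `v_k` and `q_k` are products `f(x) g(y)`, so their squared
`L²((0,π)²)` norms factor into one-dimensional integrals. The `y`-factors are combinations
`a cos y + b cos 2y` or `a sin y + b sin 2y`; these functions are orthogonal on `(0,π)` with
squared norm `π/2`, and `sin kx`, `cos kx` have squared norm `π/2` as well. This gives
`∫ |∇v_k|² = π²/4 (k²(A² + B²) + A² + 4B²)` with `A = 1/(k²+1)`, `B = 4/(k²+4)`, which collapses
to `π²/4 (A + 4B)`, and `∫ (∂_y q_k)² = π/2 · π/2 · (1 + 4)`.
-/

open Real intervalIntegral Filter Topology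

theorem integral_cos_int_mul_eq_zero {n : ℤ} (hn : n ≠ 0) :
    ∫ y in (0 : ℝ)..π, cos (n * y) = 0 := by
  rw [integral_comp_mul_left (fun y => cos y) (Int.cast_ne_zero.2 hn), integral_cos]
  simp [sin_int_mul_pi]

theorem integral_sin_nat_mul_sq {n : ℕ} (hn : n ≠ 0) :
    ∫ y in (0 : ℝ)..π, sin (n * y) ^ 2 = π / 2 := by
  rw [integral_comp_mul_left (fun y => sin y ^ 2) (Nat.cast_ne_zero.2 hn), integral_sin_sq]
  simp [sin_nat_mul_pi]
  field_simp

theorem integral_cos_nat_mul_sq {n : ℕ} (hn : n ≠ 0) :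
    ∫ y in (0 : ℝ)..π, cos (n * y) ^ 2 = π / 2 := by
  rw [integral_comp_mul_left (fun y => cos y ^ 2) (Nat.cast_ne_zero.2 hn), integral_cos_sq]
  simp [sin_nat_mul_pi]
  field_simp

theorem integral_cos_mul_cos_of_ne {m n : ℕ} (h : m ≠ n) :
    ∫ y in (0 : ℝ)..π, cos (m * y) * cos (n * y) = 0 := by
  have hsub : (m : ℤ) - n ≠ 0 := sub_ne_zero.2 (by exact_mod_cast h)
  have hadd : (m : ℤ) + n ≠ 0 := by omega
  have h2 : ∀ y : ℝ, cos (m * y) * cos (n * y)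
      = (cos (((m - n : ℤ) : ℝ) * y) + cos (((m + n : ℤ) : ℝ) * y)) / 2 := fun y => by
    push_cast
    rw [sub_mul, add_mul, ← two_mul_cos_mul_cos]
    ring
  simp_rw [h2]
  rw [integral_div, integral_add (Continuous.intervalIntegrable (by fun_prop) _ _)
    (Continuous.intervalIntegrable (by fun_prop) _ _), integral_cos_int_mul_eq_zero hsub,
    integral_cos_int_mul_eq_zero hadd]
  simp

theorem integral_sin_mul_sin_of_ne {m n : ℕ} (h : m ≠ n) :
    ∫ y in (0 : ℝ)..π, sin (m * y) * sin (n * y) = 0 := by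
  have hsub : (m : ℤ) - n ≠ 0 := sub_ne_zero.2 (by exact_mod_cast h)
  have hadd : (m : ℤ) + n ≠ 0 := by omega
  have h2 : ∀ y : ℝ, sin (m * y) * sin (n * y)
      = (cos (((m - n : ℤ) : ℝ) * y) - cos (((m + n : ℤ) : ℝ) * y)) / 2 := fun y => by
    push_cast
    rw [sub_mul, add_mul, ← two_mul_sin_mul_sin]
    ring
  simp_rw [h2]
  rw [integral_div, integral_sub (Continuous.intervalIntegrable (by fun_prop) _ _)
    (Continuous.intervalIntegrable (by fun_prop) _ _), integral_cos_int_mul_eq_zero hsub,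
    integral_cos_int_mul_eq_zero hadd]
  simp

theorem integral_mul_add_mul_sq {f g : ℝ → ℝ} (hf : Continuous f) (hg : Continuous g)
    (a b c d : ℝ) :
    ∫ y in c..d, (a * f y + b * g y) ^ 2
      = a ^ 2 * (∫ y in c..d, f y ^ 2) + 2 * a * b * (∫ y in c..d, f y * g y)
        + b ^ 2 * ∫ y in c..d, g y ^ 2 := by
  have h : ∀ y, (a * f y + b * g y) ^ 2
      = a ^ 2 * f y ^ 2 + 2 * a * b * (f y * g y) + b ^ 2 * g y ^ 2 := fun y => by ring
  simp_rw [h]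
  rw [integral_add (Continuous.intervalIntegrable (by fun_prop) _ _)
      (Continuous.intervalIntegrable (by fun_prop) _ _),
    integral_add (Continuous.intervalIntegrable (by fun_prop) _ _)
      (Continuous.intervalIntegrable (by fun_prop) _ _),
    integral_const_mul, integral_const_mul, integral_const_mul]

theorem integral_cos_add_cos_sq {m n : ℕ} (hm : m ≠ 0) (hn : n ≠ 0) (hmn : m ≠ n) (a b : ℝ) :
    ∫ y in (0 : ℝ)..π, (a * cos (m * y) + b * cos (n * y)) ^ 2 = π / 2 * (a ^ 2 + b ^ 2) := by
  rw [integral_mul_add_mul_sq (by fun_prop) (by fun_prop), integral_cos_nat_mul_sq hm,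
    integral_cos_nat_mul_sq hn, integral_cos_mul_cos_of_ne hmn]
  ring

theorem integral_sin_add_sin_sq {m n : ℕ} (hm : m ≠ 0) (hn : n ≠ 0) (hmn : m ≠ n) (a b : ℝ) :
    ∫ y in (0 : ℝ)..π, (a * sin (m * y) + b * sin (n * y)) ^ 2 = π / 2 * (a ^ 2 + b ^ 2) := by
  rw [integral_mul_add_mul_sq (by fun_prop) (by fun_prop), integral_sin_nat_mul_sq hm,
    integral_sin_nat_mul_sq hn, integral_sin_mul_sin_of_ne hmn]
  ring

theorem integral_integral_mul_sq (f g : ℝ → ℝ) (a b c d : ℝ) :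
    ∫ x in a..b, ∫ y in c..d, (f x * g y) ^ 2
      = (∫ x in a..b, f x ^ 2) * ∫ y in c..d, g y ^ 2 := by
  simp_rw [mul_pow, integral_const_mul, integral_mul_const]

theorem integral_integral_mul_sq_add_mul_sq {f₁ g₁ f₂ g₂ : ℝ → ℝ} (hf₁ : Continuous f₁)
    (hg₁ : Continuous g₁) (hf₂ : Continuous f₂) (hg₂ : Continuous g₂) (a b c d : ℝ) :
    ∫ x in a..b, ∫ y in c..d, ((f₁ x * g₁ y) ^ 2 + (f₂ x * g₂ y) ^ 2)
      = (∫ x in a..b, f₁ x ^ 2) * (∫ y in c..d, g₁ y ^ 2)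
        + (∫ x in a..b, f₂ x ^ 2) * ∫ y in c..d, g₂ y ^ 2 := by
  have inner : ∀ x, ∫ y in c..d, ((f₁ x * g₁ y) ^ 2 + (f₂ x * g₂ y) ^ 2)
      = f₁ x ^ 2 * (∫ y in c..d, g₁ y ^ 2) + f₂ x ^ 2 * ∫ y in c..d, g₂ y ^ 2 := fun x => by
    rw [integral_add (Continuous.intervalIntegrable (by fun_prop) _ _)
      (Continuous.intervalIntegrable (by fun_prop) _ _)]
    simp_rw [mul_pow, integral_const_mul]
  simp_rw [inner]
  rw [integral_add (Continuous.intervalIntegrable (by fun_prop) _ _)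
    (Continuous.intervalIntegrable (by fun_prop) _ _), integral_mul_const, integral_mul_const]

theorem hasDerivAt_sin_const_mul (c x : ℝ) :
    HasDerivAt (fun x => sin (c * x)) (c * cos (c * x)) x := by
  simpa [mul_comm] using ((hasDerivAt_id' x).const_mul c).sin

theorem hasDerivAt_cos_const_mul (c x : ℝ) :
    HasDerivAt (fun x => cos (c * x)) (-(c * sin (c * x))) x := by
  simpa [mul_comm] using ((hasDerivAt_id' x).const_mul c).cos

theorem deriv_vfun_fst (k : ℕ) (x y : ℝ) :
    deriv (fun x' => vfun k x' y) x
      = k * cos (k * x) * (((k : ℝ) ^ 2 + 1)⁻¹ * cos y - 4 * ((k : ℝ) ^ 2 + 4)⁻¹ * cos (2 * y)) :=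
  ((hasDerivAt_sin_const_mul k x).mul_const _).deriv

theorem deriv_vfun_snd (k : ℕ) (x y : ℝ) :
    deriv (fun y' => vfun k x y') y
      = sin (k * x) * (-((k : ℝ) ^ 2 + 1)⁻¹ * sin y + 8 * ((k : ℝ) ^ 2 + 4)⁻¹ * sin (2 * y)) := by
  have h : HasDerivAt (fun y' => vfun k x y') (sin (k * x) * (((k : ℝ) ^ 2 + 1)⁻¹ * -sin y
      - 4 * ((k : ℝ) ^ 2 + 4)⁻¹ * -(2 * sin (2 * y)))) y :=
    (((hasDerivAt_cos y).const_mul _).sub ((hasDerivAt_cos_const_mul 2 y).const_mul _)).const_mul _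
  rw [h.deriv]
  ring

theorem deriv_qfun_snd (k : ℕ) (x y : ℝ) :
    deriv (fun y' => qfun k x y') y = sin (k * x) * (-sin y + 2 * sin (2 * y)) := by
  have h : HasDerivAt (fun y' => qfun k x y') (sin (k * x) * (-sin y - -(2 * sin (2 * y)))) y :=
    ((hasDerivAt_cos y).sub (hasDerivAt_cos_const_mul 2 y)).const_mul _
  rw [h.deriv]
  ring

theorem integral_integral_deriv_vfun_sq {k : ℕ} (hk : k ≠ 0) :
    ∫ x in (0 : ℝ)..π, ∫ y in (0 : ℝ)..π,
        ((deriv (fun x' => vfun k x' y) x) ^ 2 + (deriv (fun y' => vfun k x y') y) ^ 2)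
      = π ^ 2 / 4 * (1 / ((k : ℝ) ^ 2 + 1) + 16 / ((k : ℝ) ^ 2 + 4)) := by
  simp_rw [deriv_vfun_fst, deriv_vfun_snd]
  rw [integral_integral_mul_sq_add_mul_sq (by fun_prop) (by fun_prop) (by fun_prop)
    (by fun_prop)]
  set A := ((k : ℝ) ^ 2 + 1)⁻¹ with hA
  set B := ((k : ℝ) ^ 2 + 4)⁻¹ with hB
  have hx : ∫ x in (0 : ℝ)..π, ((k : ℝ) * cos (k * x)) ^ 2 = k ^ 2 * (π / 2) := by
    simp_rw [mul_pow]
    rw [integral_const_mul, integral_cos_nat_mul_sq hk]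
  have hy₁ : ∫ y in (0 : ℝ)..π, (A * cos y - 4 * B * cos (2 * y)) ^ 2
      = π / 2 * (A ^ 2 + (4 * B) ^ 2) := by
    simpa [sub_eq_add_neg] using
      integral_cos_add_cos_sq one_ne_zero two_ne_zero (by norm_num) A (-(4 * B))
  have hy₂ : ∫ y in (0 : ℝ)..π, (-A * sin y + 8 * B * sin (2 * y)) ^ 2
      = π / 2 * (A ^ 2 + (8 * B) ^ 2) := by
    simpa using integral_sin_add_sin_sq one_ne_zero two_ne_zero (by norm_num) (-A) (8 * B)
  rw [hx, hy₁, integral_sin_nat_mul_sq hk, hy₂, hA, hB]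
  field_simp
  ring

theorem integral_integral_deriv_qfun_sq {k : ℕ} (hk : k ≠ 0) :
    ∫ x in (0 : ℝ)..π, ∫ y in (0 : ℝ)..π, (deriv (fun y' => qfun k x y') y) ^ 2
      = 5 * π ^ 2 / 4 := by
  simp_rw [deriv_qfun_snd]
  rw [integral_integral_mul_sq, integral_sin_nat_mul_sq hk]
  have hy : ∫ y in (0 : ℝ)..π, (-sin y + 2 * sin (2 * y)) ^ 2 = π / 2 * (1 + 2 ^ 2) := by
    simpa [neg_one_mul] using
      integral_sin_add_sin_sq one_ne_zero two_ne_zero (by norm_num) (-1) 2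
  rw [hy]
  ring

theorem tendsto_div_sq_add_const_atTop_nhds_zero (C c : ℝ) :
    Tendsto (fun k : ℕ => C / ((k : ℝ) ^ 2 + c)) atTop (𝓝 0) :=
  tendsto_const_nhds.div_atTop (tendsto_atTop_add_const_right _ c
    ((tendsto_pow_atTop two_ne_zero).comp tendsto_natCast_atTop_atTop))

/-- Explicit integral computations for the counterexample of Remark 3:
`∫_Ω |∇v_k|² = (π²/4)(1/(k²+1) + 16/(k²+4))`, `∫_Ω (∂_y q_k)² = 5π²/4`, the
corresponding ratio of square roots equals `(1/√5)√(1/(k²+1) + 16/(k²+4))`,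
and this quantity tends to `0` as `k → ∞`. -/
theorem stmt18 :
    (∀ k : ℕ, 1 ≤ k →
      (∫ x in (0:ℝ)..π, ∫ y in (0:ℝ)..π,
          ((deriv (fun x' => vfun k x' y) x) ^ 2 + (deriv (fun y' => vfun k x y') y) ^ 2))
        = π ^ 2 / 4 * (1 / ((k : ℝ) ^ 2 + 1) + 16 / ((k : ℝ) ^ 2 + 4))
      ∧ (∫ x in (0:ℝ)..π, ∫ y in (0:ℝ)..π,
          (deriv (fun y' => qfun k x y') y) ^ 2) = 5 * π ^ 2 / 4
      ∧ Real.sqrt (∫ x in (0:ℝ)..π, ∫ y in (0:ℝ)..π,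
            ((deriv (fun x' => vfun k x' y) x) ^ 2 + (deriv (fun y' => vfun k x y') y) ^ 2))
          / Real.sqrt (∫ x in (0:ℝ)..π, ∫ y in (0:ℝ)..π,
            (deriv (fun y' => qfun k x y') y) ^ 2)
        = 1 / Real.sqrt 5 * Real.sqrt (1 / ((k : ℝ) ^ 2 + 1) + 16 / ((k : ℝ) ^ 2 + 4)))
    ∧ Filter.Tendsto
        (fun k : ℕ => 1 / Real.sqrt 5 *
          Real.sqrt (1 / ((k : ℝ) ^ 2 + 1) + 16 / ((k : ℝ) ^ 2 + 4)))
        Filter.atTop (nhds 0) := by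
  refine ⟨fun k hk => ?_, ?_⟩
  · have hv := integral_integral_deriv_vfun_sq (k := k) (by omega)
    have hq := integral_integral_deriv_qfun_sq (k := k) (by omega)
    refine ⟨hv, hq, ?_⟩
    rw [hv, hq, show 5 * π ^ 2 / 4 = π ^ 2 / 4 * 5 by ring, sqrt_mul (by positivity),
      sqrt_mul (by positivity)]
    field_simp
  · simpa using (((tendsto_div_sq_add_const_atTop_nhds_zero 1 1).add
      (tendsto_div_sq_add_const_atTop_nhds_zero 16 4)).sqrt.const_mul (1 / √5))
end
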